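/- Let P'(z) = ∏_{j=1}^{n−1}(z−ζ_j) and P(z) = ∫_β^z P'(w) dw, with z_i a simple root of P, and let j ≠ k with z_i ∉ {ζ_j, ζ_k}. Then the mixed second partial derivative of the implicit root satisfies ∂²z_i/∂ζ_j∂ζ_k = (1/(z_i−ζ_k)) ∂z_i/∂ζ_j + (1/(z_i−ζ_j)) ∂z_i/∂ζ_k − (P''(z_i)/P'(z_i)) (∂z_i/∂ζ_j)(∂z_i/∂ζ_k) − (1/P'(z_i)) ∫_β^{z_i} P'(w)/((w−ζ_j)(w−ζ_k)) dw. -/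

import Mathlib

/-!
Both `P s t` and `P s 0 - P s 1` are affine in the parameter that varies, because their
derivatives are and their values at `β` vanish. Implicit differentiation of
`P s t (z s t) = 0` in `t` therefore gives `∂_t z = (P s 0 - P s 1)(z) / P'(z)` for every `s`
near `ζ_j`. Differentiating this quotient in `s`, the numerator has derivative
`(z - ζ_j) Q(z) ∂_s z - R(z)` and the denominator `P'(z)` has derivative
`P''(z) ∂_s z - (z - ζ_k) Q(z)`; the quotient rule then rearranges into the formula, whatever
the value of `∂_s z`.
-/

open Polynomial Filter Topology

namespace Polynomial

theorem eq_of_derivative_eq_of_eval_eq {R : Type*} [CommRing R] [IsAddTorsionFree R]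
    {p q : R[X]} {β : R} (hd : derivative p = derivative q) (hβ : p.eval β = q.eval β) :
    p = q := by
  have hC := eq_C_of_derivative_eq_zero (p := p - q) (by rw [derivative_sub, hd, sub_self])
  have h0 : (p - q).coeff 0 = 0 := by
    simpa [hβ] using (congrArg (eval β) hC).symm
  rw [h0, C_0] at hC
  exact sub_eq_zero.1 hC

section AffineFamily

variable {𝕜 : Type*} [NontriviallyNormedField 𝕜] {F : 𝕜 → 𝕜[X]} {A B : 𝕜[X]}
  {f : 𝕜 → 𝕜} {f' t₀ : 𝕜}

theorem hasDerivAt_eval_of_affine (hF : ∀ t, F t = A + C t * B) (hf : HasDerivAt f f' t₀) :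
    HasDerivAt (fun t => (F t).eval (f t))
      ((derivative (F t₀)).eval (f t₀) * f' + B.eval (f t₀)) t₀ := by
  simp only [hF, eval_add, eval_mul, eval_C, derivative_add, derivative_mul, derivative_C,
    zero_mul, zero_add]
  have hA : HasDerivAt (fun t => A.eval (f t)) ((derivative A).eval (f t₀) * f') t₀ :=
    (A.hasDerivAt _).comp t₀ hf
  have hB : HasDerivAt (fun t => B.eval (f t)) ((derivative B).eval (f t₀) * f') t₀ :=
    (B.hasDerivAt _).comp t₀ hf
  exact (hA.add ((hasDerivAt_id' t₀).mul hB)).congr_deriv (by ring)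

theorem deriv_eq_of_eval_eq_zero_of_affine (hF : ∀ t, F t = A + C t * B)
    (hf : DifferentiableAt 𝕜 f t₀) (hroot : ∀ᶠ t in 𝓝 t₀, (F t).eval (f t) = 0)
    (hne : (derivative (F t₀)).eval (f t₀) ≠ 0) :
    deriv f t₀ = -B.eval (f t₀) / (derivative (F t₀)).eval (f t₀) := by
  have h := (hasDerivAt_eval_of_affine hF hf.hasDerivAt).deriv
  rw [EventuallyEq.deriv_eq (f := fun _ => 0) hroot, deriv_const] at h
  rw [eq_div_iff hne]
  linear_combination -h

end AffineFamily

end Polynomial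

section RootFamily

variable {Q R : ℂ[X]} {β : ℂ} {P : ℂ → ℂ → ℂ[X]}

theorem family_eq_affine_snd
    (hPd : ∀ s t, derivative (P s t) = (X - C s) * (X - C t) * Q)
    (hPβ : ∀ s t, (P s t).eval β = 0) (s t : ℂ) :
    P s t = P s 0 + C t * (P s 1 - P s 0) := by
  refine eq_of_derivative_eq_of_eval_eq (β := β) ?_ (by simp [hPβ])
  simp only [derivative_add, derivative_mul, derivative_sub, derivative_C, hPd, C_0, C_1]
  ring

theorem family_sub_eq_affine_fst
    (hPd : ∀ s t, derivative (P s t) = (X - C s) * (X - C t) * Q)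
    (hPβ : ∀ s t, (P s t).eval β = 0) (hRd : derivative R = Q) (hRβ : R.eval β = 0) (s : ℂ) :
    P s 0 - P s 1 = P 0 0 - P 0 1 + C s * -R := by
  refine eq_of_derivative_eq_of_eval_eq (β := β) ?_ (by simp [hPβ, hRβ])
  simp only [derivative_add, derivative_mul, derivative_sub, derivative_neg, derivative_C, hPd,
    hRd, C_0, C_1]
  ring

end RootFamily

theorem stmt9_general (Q : Polynomial ℂ) (β ζj ζk zi : ℂ)
    (P : ℂ → ℂ → Polynomial ℂ)
    (hPd : ∀ s t : ℂ, Polynomial.derivative (P s t) =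
      (Polynomial.X - Polynomial.C s) * (Polynomial.X - Polynomial.C t) * Q)
    (hPβ : ∀ s t : ℂ, (P s t).eval β = 0)
    (z : ℂ → ℂ → ℂ)
    (hz : AnalyticAt ℂ (fun p : ℂ × ℂ => z p.1 p.2) (ζj, ζk))
    (hz0 : z ζj ζk = zi)
    (hroot : ∀ᶠ p : ℂ × ℂ in nhds (ζj, ζk), (P p.1 p.2).eval (z p.1 p.2) = 0)
    (hsimple : (zi - ζj) * (zi - ζk) * Q.eval zi ≠ 0)
    (R : Polynomial ℂ) (hRd : Polynomial.derivative R = Q) (hRβ : R.eval β = 0) :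
    deriv (fun s => deriv (fun t => z s t) ζk) ζj =
      (1 / (zi - ζk)) * deriv (fun s => z s ζk) ζj +
      (1 / (zi - ζj)) * deriv (fun t => z ζj t) ζk -
      ((Polynomial.derivative ((Polynomial.X - Polynomial.C ζj) *
          (Polynomial.X - Polynomial.C ζk) * Q)).eval zi /
        ((zi - ζj) * (zi - ζk) * Q.eval zi)) *
        (deriv (fun s => z s ζk) ζj * deriv (fun t => z ζj t) ζk) -
      (1 / ((zi - ζj) * (zi - ζk) * Q.eval zi)) * R.eval zi := by
  have had : HasDerivAt (fun s => z s ζk) (deriv (fun s => z s ζk) ζj) ζj :=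
    hz.curry_left.differentiableAt.hasDerivAt
  have hN := hasDerivAt_eval_of_affine (family_sub_eq_affine_fst hPd hPβ hRd hRβ) had
  have hD := hasDerivAt_eval_of_affine (F := fun s => (X - C s) * (X - C ζk) * Q)
    (A := X * (X - C ζk) * Q) (B := -((X - C ζk) * Q)) (fun s => by ring) had
  have hDne : ∀ᶠ s in 𝓝 ζj, ((X - C s) * (X - C ζk) * Q).eval (z s ζk) ≠ 0 :=
    hD.continuousAt.eventually_ne (by simpa [hz0] using hsimple)
  have hE : ∀ᶠ s in 𝓝 ζj, ∀ᶠ t in 𝓝 ζk,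
      (P s t).eval (z s t) = 0 ∧ AnalyticAt ℂ (fun p : ℂ × ℂ => z p.1 p.2) (s, t) := by
    have h := hroot.and hz.eventually_analyticAt
    rw [nhds_prod_eq] at h
    exact h.curry
  have hinner : ∀ᶠ s in 𝓝 ζj, deriv (fun t => z s t) ζk =
      (P s 0 - P s 1).eval (z s ζk) / ((X - C s) * (X - C ζk) * Q).eval (z s ζk) := by
    filter_upwards [hE, hDne] with s hs hsD
    rw [← hPd] at hsD ⊢
    rw [deriv_eq_of_eval_eq_zero_of_affine (family_eq_affine_snd hPd hPβ s)
      hs.self_of_nhds.2.curry_right.differentiableAt (hs.mono fun _ h => h.1) hsD,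
      ← eval_neg, neg_sub]
  rw [EventuallyEq.deriv_eq hinner, (hN.fun_div hD hDne.self_of_nhds).deriv,
    hinner.self_of_nhds, hz0]
  have hN' : (derivative (P ζj 0 - P ζj 1)).eval zi = (zi - ζj) * Q.eval zi := by
    simp only [derivative_sub, hPd, eval_sub, eval_mul, eval_X, eval_C]
    ring
  have hj : zi - ζj ≠ 0 := left_ne_zero_of_mul (left_ne_zero_of_mul hsimple)
  have hk : zi - ζk ≠ 0 := right_ne_zero_of_mul (left_ne_zero_of_mul hsimple)
  have hq : Q.eval zi ≠ 0 := right_ne_zero_of_mul hsimple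
  simp only [hN', eval_neg, eval_mul, eval_sub, eval_X, eval_C]
  field_simp
  ring

/-- With `P'(z) = (z - ζ_j)(z - ζ_k) Q(z)` and `P s t` the antiderivative of
`(z-s)(z-t)Q(z)` vanishing at `β`, let `z` be the analytic implicit root
function of `(ζ_j, ζ_k)` near `(ζj₀, ζk₀)` with value the simple root `z_i`,
`z_i ∉ {ζj₀, ζk₀}`. Then the mixed second partial satisfies
`∂²z_i/∂ζ_j∂ζ_k = (1/(z_i-ζ_k)) ∂z_i/∂ζ_j + (1/(z_i-ζ_j)) ∂z_i/∂ζ_k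
 - (P''(z_i)/P'(z_i)) (∂z_i/∂ζ_j)(∂z_i/∂ζ_k) - (1/P'(z_i)) ∫_β^{z_i} P'(w)/((w-ζ_j)(w-ζ_k)) dw`,
where the integral equals `R(z_i)` for `R` the antiderivative of `Q` vanishing at `β`. -/
theorem stmt9 (Q : Polynomial ℂ) (β ζj ζk zi : ℂ) (hjk : ζj ≠ ζk)
    (P : ℂ → ℂ → Polynomial ℂ)
    (hPd : ∀ s t : ℂ, Polynomial.derivative (P s t) =
      (Polynomial.X - Polynomial.C s) * (Polynomial.X - Polynomial.C t) * Q)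
    (hPβ : ∀ s t : ℂ, (P s t).eval β = 0)
    (z : ℂ → ℂ → ℂ)
    (hz : AnalyticAt ℂ (fun p : ℂ × ℂ => z p.1 p.2) (ζj, ζk))
    (hz0 : z ζj ζk = zi)
    (hroot : ∀ᶠ p : ℂ × ℂ in nhds (ζj, ζk), (P p.1 p.2).eval (z p.1 p.2) = 0)
    (hsimple : (zi - ζj) * (zi - ζk) * Q.eval zi ≠ 0)
    (R : Polynomial ℂ) (hRd : Polynomial.derivative R = Q) (hRβ : R.eval β = 0) :
    deriv (fun s => deriv (fun t => z s t) ζk) ζj =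
      (1 / (zi - ζk)) * deriv (fun s => z s ζk) ζj +
      (1 / (zi - ζj)) * deriv (fun t => z ζj t) ζk -
      ((Polynomial.derivative ((Polynomial.X - Polynomial.C ζj) *
          (Polynomial.X - Polynomial.C ζk) * Q)).eval zi /
        ((zi - ζj) * (zi - ζk) * Q.eval zi)) *
        (deriv (fun s => z s ζk) ζj * deriv (fun t => z ζj t) ζk) -
      (1 / ((zi - ζj) * (zi - ζk) * Q.eval zi)) * R.eval zi :=
  stmt9_general Q β ζj ζk zi P hPd hPβ z hz hz0 hroot hsimple R hRd hRβ
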